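/- For every factor index k, the cross-covariance matrix between the score s_β and the score s_k is the zero matrix: Cov(s_β, s_k) = 0_{p×q_k²}. -/

import Mathlib

open Matrix MeasureTheory ProbabilityTheory
open scoped NNReal

/-!
Both scores are functions of the standard normal vector `u`: `s_β` is linear, hence odd, in `u`,
while `s_k` is even, since it depends on `e` only through `e eᵀ`. The law of `u` is invariant
under `u ↦ -u`, so the odd functions `s_β` and `s_β s_k` of `u` have mean zero. No moment bounds
are needed: `∫ f (-x) ∂ν = ∫ f x ∂ν` holds for every `f` once `ν` is negation invariant.
-/

instance ProbabilityTheory.isNegInvariant_gaussianReal (v : ℝ≥0) :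
    (gaussianReal 0 v).IsNegInvariant :=
  ⟨by rw [Measure.neg]; simpa using gaussianReal_map_neg (μ := 0) (v := v)⟩

theorem MeasureTheory.integral_eq_zero_of_odd {G E : Type*} [AddGroup G] [MeasurableSpace G]
    [MeasurableNeg G] [NormedAddCommGroup E] [NormedSpace ℝ E] (ν : Measure G)
    [ν.IsNegInvariant] {f : G → E} (hf : f.Odd) : ∫ x, f x ∂ν = 0 := by
  have : IsAddTorsionFree E := .of_isTorsionFree ℝ E
  simp_rw [← self_eq_neg, ← integral_neg, ← hf.eq, integral_neg_eq_self]

theorem ProbabilityTheory.integral_comp_eq_zero_of_odd_of_iIndepFun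
    {Ω ι E : Type*} [MeasurableSpace Ω] {μ : Measure Ω} [IsProbabilityMeasure μ] [Fintype ι]
    [NormedAddCommGroup E] [NormedSpace ℝ E]
    (ν : ι → Measure ℝ) [∀ i, SigmaFinite (ν i)] [∀ i, (ν i).IsNegInvariant]
    {u : Ω → ι → ℝ} (hmeas : ∀ i, Measurable fun ω => u ω i)
    (hindep : iIndepFun (fun i ω => u ω i) μ) (hlaw : ∀ i, μ.map (fun ω => u ω i) = ν i)
    {f : (ι → ℝ) → E} (hf_cont : Continuous f) (hf : f.Odd) :
    ∫ ω, f (u ω) ∂μ = 0 := by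
  have hmap : μ.map u = Measure.pi ν := by
    simpa only [hlaw] using
      (iIndepFun_iff_map_fun_eq_pi_map fun i => (hmeas i).aemeasurable).1 hindep
  rw [← integral_map (measurable_pi_lambda u hmeas).aemeasurable hf_cont.aestronglyMeasurable,
    hmap]
  exact integral_eq_zero_of_odd _ hf

theorem stmt4 {Ω : Type*} [MeasurableSpace Ω] (μ : Measure Ω) [IsProbabilityMeasure μ]
    (n p r : ℕ) (σ : ℝ)
    (V R : Matrix (Fin n) (Fin n) ℝ)
    (X : Matrix (Fin n) (Fin p) ℝ)
    (l q : Fin r → ℕ)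
    (Z : (k : Fin r) → Fin (l k) → Matrix (Fin n) (Fin (q k)) ℝ)
    (u : Ω → Fin n → ℝ)
    (humeas : ∀ i, Measurable fun ω => u ω i)
    (huindep : iIndepFun (fun i ω => u ω i) μ)
    (hulaw : ∀ i, Measure.map (fun ω => u ω i) μ = gaussianReal 0 1)
    (e : Ω → Fin n → ℝ) (he : ∀ ω, e ω = σ • (R *ᵥ u ω))
    (sβ : Ω → Fin p → ℝ)
    (hsβ : ∀ ω, sβ ω = (σ ^ 2)⁻¹ • ((Xᵀ * V⁻¹) *ᵥ e ω))
    (s : (k : Fin r) → Ω → (Fin (q k) × Fin (q k)) → ℝ)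
    -- `s k` is the `vec`-score for factor `k`: its coordinate at the column-major
    -- vectorization index `(j, i)` is the `(i, j)` entry of the score matrix
    (hs : ∀ k ω idx, s k ω idx =
      ((1 / 2 : ℝ) •
        ∑ j, (Z k j)ᵀ * V⁻¹ * ((σ ^ 2)⁻¹ • vecMulVec (e ω) (e ω) - V) * V⁻¹ * Z k j)
        idx.2 idx.1) :
    ∀ (k : Fin r) (a : Fin p) (b : Fin (q k) × Fin (q k)),
      (∫ ω, sβ ω a * s k ω b ∂μ) - (∫ ω, sβ ω a ∂μ) * (∫ ω, s k ω b ∂μ) = 0 := by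
  intro k a b
  let noise : (Fin n → ℝ) → Fin n → ℝ := fun v => σ • (R *ᵥ v)
  let scoreβ : (Fin n → ℝ) → ℝ := fun w => ((σ ^ 2)⁻¹ • ((Xᵀ * V⁻¹) *ᵥ w)) a
  let scoreK : (Fin n → ℝ) → ℝ := fun w => ((1 / 2 : ℝ) •
    ∑ j, (Z k j)ᵀ * V⁻¹ * ((σ ^ 2)⁻¹ • vecMulVec w w - V) * V⁻¹ * Z k j) b.2 b.1
  have hnoise_odd : noise.Odd := fun v => by simp [noise, mulVec_neg]
  have hβ_odd : scoreβ.Odd := fun w => by simp [scoreβ, mulVec_neg]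
  have hK_even : scoreK.Even := fun w => by
    simp only [scoreK, neg_vecMulVec, vecMulVec_neg, neg_neg]
  have hβ_cont : Continuous (scoreβ ∘ noise) := by fun_prop
  have hK_cont : Continuous (scoreK ∘ noise) := by fun_prop
  have hsβ' : ∀ ω, sβ ω a = (scoreβ ∘ noise) (u ω) := fun ω => by simp [hsβ, he, scoreβ, noise]
  have hs' : ∀ ω, s k ω b = (scoreK ∘ noise) (u ω) := fun ω => by simp [hs, he, scoreK, noise]
  have hβ_mean := integral_comp_eq_zero_of_odd_of_iIndepFun _ humeas huindep hulaw
    hβ_cont (hβ_odd.comp_odd hnoise_odd)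
  have hβK_mean := integral_comp_eq_zero_of_odd_of_iIndepFun _ humeas huindep hulaw
    (hβ_cont.mul hK_cont) ((hβ_odd.comp_odd hnoise_odd).mul_even (hK_even.comp_odd hnoise_odd))
  simp only [Pi.mul_apply] at hβK_mean
  simp only [hsβ', hs', hβ_mean, hβK_mean, zero_mul, sub_zero]
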